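/- arXiv:1511.01781 — 2 statements merged into one kernel-verified Lean document; each statement's English description precedes it below -/
import Mathlib

section
/- Let A,B,C,D,E ∈ ℂ with A ≠ 0 and AB − 2AC + DE = 0, and let α, β ∈ ℂ be nonzero. Then: (a) F_{A,B,C,D,E}(−αz, α⁻¹w, z, w) = 0 for all z,w ∈ ℂ if and only if Aα⁴ + Dα² + A = 0; and (b) F_{A,B,C,D,E}(−βw, β⁻¹z, z, w) = 0 for all z,w ∈ ℂ if and only if Aβ⁴ + Eβ² + A = 0. Equivalently, the line {x + αz = y − α⁻¹w = 0} (resp. {x + βw = y − β⁻¹z = 0}) on the quadric Q₆ = {xy + zw = 0} lies on the surface X_{A,B,C,D,E} iff α (resp. β) is a root of At⁴ + Dt² + A (resp. At⁴ + Et² + A). -/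
/-- The quartic `F_{A,B,C,D,E}(x,y,z,w) = A(x⁴+y⁴+z⁴+w⁴) + Bxyzw + C(x²y²+z²w²)
+ D(x²z²+y²w²) + E(x²w²+y²z²)`. -/
def quarticF (A B C D E x y z w : ℂ) : ℂ :=
  A * (x ^ 4 + y ^ 4 + z ^ 4 + w ^ 4) + B * (x * y * z * w)
    + C * (x ^ 2 * y ^ 2 + z ^ 2 * w ^ 2) + D * (x ^ 2 * z ^ 2 + y ^ 2 * w ^ 2)
    + E * (x ^ 2 * w ^ 2 + y ^ 2 * z ^ 2)

/-! On the line `x = -αz, y = α⁻¹w` the quartic becomes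
`P(α) (z⁴ + α⁻⁴w⁴) + (2C - B + E(α² + α⁻²)) z²w²` with `P(α) = Aα⁴ + Dα² + A`.
When `P(α) = 0` we have `A(α² + α⁻²) = -D`, so `A` times the middle coefficient is
`-(AB - 2AC + DE) = 0`. The second family of lines is the first one after exchanging
`z ↔ w`, which exchanges `D ↔ E` in the quartic. -/

section

variable {A B C D E : ℂ}

theorem quarticF_swap_zw (x y z w : ℂ) :
    quarticF A B C D E x y w z = quarticF A B C E D x y z w := by
  unfold quarticF
  ring

theorem quarticF_on_line {α : ℂ} (hα : α ≠ 0) (z w : ℂ) :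
    quarticF A B C D E (-(α * z)) (α⁻¹ * w) z w =
      (A * α ^ 4 + D * α ^ 2 + A) * (z ^ 4 + α⁻¹ ^ 4 * w ^ 4)
        + (2 * C - B + E * (α ^ 2 + α⁻¹ ^ 2)) * z ^ 2 * w ^ 2 := by
  unfold quarticF
  field_simp
  ring

theorem mixed_coeff_eq_zero {α : ℂ} (hA : A ≠ 0) (h : A * B - 2 * A * C + D * E = 0)
    (hα : α ≠ 0) (hP : A * α ^ 4 + D * α ^ 2 + A = 0) :
    2 * C - B + E * (α ^ 2 + α⁻¹ ^ 2) = 0 := by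
  have hsum : A * (α ^ 2 + α⁻¹ ^ 2) = -D := by
    field_simp
    linear_combination hP
  refine (mul_eq_zero.mp ?_).resolve_left hA
  linear_combination E * hsum - h

theorem quarticF_vanishes_on_line_iff {α : ℂ} (hA : A ≠ 0)
    (h : A * B - 2 * A * C + D * E = 0) (hα : α ≠ 0) :
    (∀ z w : ℂ, quarticF A B C D E (-(α * z)) (α⁻¹ * w) z w = 0) ↔
      A * α ^ 4 + D * α ^ 2 + A = 0 := by
  refine ⟨fun hF => ?_, fun hP z w => ?_⟩
  · have h10 := hF 1 0
    rw [quarticF_on_line hα] at h10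
    simpa using h10
  · rw [quarticF_on_line hα, hP, mixed_coeff_eq_zero hA h hα hP]
    ring

end

/-- Let `A ≠ 0`, `AB − 2AC + DE = 0` and `α, β ≠ 0`. Then the line
`{x + αz = y − α⁻¹w = 0}` on the quadric `Q₆ = {xy + zw = 0}` lies on the surface
`X_{A,B,C,D,E}` iff `Aα⁴ + Dα² + A = 0`, and the line `{x + βw = y − β⁻¹z = 0}`
lies on `X_{A,B,C,D,E}` iff `Aβ⁴ + Eβ² + A = 0`. -/
theorem line_on_quartic_iff (A B C D E α β : ℂ) (hA : A ≠ 0)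
    (h : A * B - 2 * A * C + D * E = 0) (hα : α ≠ 0) (hβ : β ≠ 0) :
    ((∀ z w : ℂ, quarticF A B C D E (-(α * z)) (α⁻¹ * w) z w = 0) ↔
        A * α ^ 4 + D * α ^ 2 + A = 0) ∧
      ((∀ z w : ℂ, quarticF A B C D E (-(β * w)) (β⁻¹ * z) z w = 0) ↔
        A * β ^ 4 + E * β ^ 2 + A = 0) := by
  refine ⟨quarticF_vanishes_on_line_iff hA h hα, ?_⟩
  have h' : A * B - 2 * A * C + E * D = 0 := by linear_combination h
  rw [← quarticF_vanishes_on_line_iff hA h' hβ, forall_comm]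
  simp only [← quarticF_swap_zw]
end

section
/- Let A,B,C,D,E ∈ ℂ with A ≠ 0, AB − 2AC + DE = 0, D² ≠ 4A² and E² ≠ 4A². Let 𝒜 = {W(α) : α ∈ ℂ, Aα⁴ + Dα² + A = 0} and ℬ = {W'(β) : β ∈ ℂ, Aβ⁴ + Eβ² + A = 0}, each a set of four 2-dimensional subspaces of ℂ⁴, where W(α) = {x + αz = y − α⁻¹w = 0} and W'(β) = {x + βw = y − β⁻¹z = 0}. Let Γ be the group of projective transformations of ℙ³(ℂ) generated by [x:y:z:w] ↦ [y:x:w:z], [z:w:x:y], [x:y:−z:−w], [x:−y:z:−w]. Then Γ preserves the sets 𝒜 and ℬ, and for any L₁, L₂ ∈ 𝒜 and M₁, M₂ ∈ ℬ there exists a unique γ ∈ Γ with γ(L₁) = L₂ and γ(M₁) = M₂; i.e., Γ acts simply transitively on 𝒜 × ℬ. -/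
open Matrix

/-- The subgroup of nonzero scalar matrices in `GLₙ(ℂ)`. -/
noncomputable def scalarUnits (n : ℕ) : Subgroup (GL (Fin n) ℂ) :=
  (Units.map (algebraMap ℂ (Matrix (Fin n) (Fin n) ℂ)).toMonoidHom).range

instance scalarUnits_normal (n : ℕ) : (scalarUnits n).Normal := by
  constructor
  rintro s hs g
  obtain ⟨c, rfl⟩ := hs
  refine ⟨c, Units.ext ?_⟩
  simp only [Units.coe_map, Units.val_mul, MonoidHom.coe_coe, RingHom.toMonoidHom_eq_coe]
  rw [← Algebra.commutes, mul_assoc, Units.mul_inv, mul_one]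

/-- `PGLₙ(ℂ)`, the quotient of `GLₙ(ℂ)` by its subgroup of nonzero scalar matrices;
its elements are the projective transformations of `ℙⁿ⁻¹(ℂ)`. -/
noncomputable def PGL (n : ℕ) : Type :=
  GL (Fin n) ℂ ⧸ scalarUnits n

noncomputable instance (n : ℕ) : Group (PGL n) :=
  inferInstanceAs (Group (GL (Fin n) ℂ ⧸ scalarUnits n))

/-- The natural projection `GLₙ(ℂ) → PGLₙ(ℂ)`. -/
noncomputable def toPGL (n : ℕ) : GL (Fin n) ℂ →* PGL n :=
  QuotientGroup.mk' (scalarUnits n)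

/-- The matrix of `(x,y,z,w) ↦ (y,x,w,z)`. -/
noncomputable def g₁ : GL (Fin 4) ℂ :=
  Matrix.GeneralLinearGroup.mkOfDetNeZero !![0,1,0,0; 1,0,0,0; 0,0,0,1; 0,0,1,0]
    (by rw [Matrix.det_succ_row_zero]
        simp [Fin.sum_univ_four, Matrix.det_fin_three, Matrix.submatrix, Fin.succAbove])

/-- The matrix of `(x,y,z,w) ↦ (z,w,x,y)`. -/
noncomputable def g₂ : GL (Fin 4) ℂ :=
  Matrix.GeneralLinearGroup.mkOfDetNeZero !![0,0,1,0; 0,0,0,1; 1,0,0,0; 0,1,0,0]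
    (by rw [Matrix.det_succ_row_zero]
        simp [Fin.sum_univ_four, Matrix.det_fin_three, Matrix.submatrix, Fin.succAbove])

/-- The matrix of `(x,y,z,w) ↦ (x,y,−z,−w)`. -/
noncomputable def g₃ : GL (Fin 4) ℂ :=
  Matrix.GeneralLinearGroup.mkOfDetNeZero !![1,0,0,0; 0,1,0,0; 0,0,-1,0; 0,0,0,-1]
    (by rw [Matrix.det_succ_row_zero]
        simp [Fin.sum_univ_four, Matrix.det_fin_three, Matrix.submatrix, Fin.succAbove])

/-- The matrix of `(x,y,z,w) ↦ (x,−y,z,−w)`. -/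
noncomputable def g₄ : GL (Fin 4) ℂ :=
  Matrix.GeneralLinearGroup.mkOfDetNeZero !![1,0,0,0; 0,-1,0,0; 0,0,1,0; 0,0,0,-1]
    (by rw [Matrix.det_succ_row_zero]
        simp [Fin.sum_univ_four, Matrix.det_fin_three, Matrix.submatrix, Fin.succAbove])

/-- The group `Γ` of projective transformations of `ℙ³(ℂ)` generated by
`[x:y:z:w] ↦ [y:x:w:z], [z:w:x:y], [x:y:−z:−w], [x:−y:z:−w]`. -/
noncomputable def Γ : Subgroup (PGL 4) :=
  Subgroup.closure {toPGL 4 g₁, toPGL 4 g₂, toPGL 4 g₃, toPGL 4 g₄}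

/-- A projective transformation `γ` maps the line (2-dimensional subspace) `L` to `L'`
if some (equivalently, any) linear representative of `γ` maps `L` onto `L'`. -/
noncomputable def mapsLine (γ : PGL 4) (L L' : Submodule ℂ (Fin 4 → ℂ)) : Prop :=
  ∃ g : GL (Fin 4) ℂ, toPGL 4 g = γ ∧
    Submodule.map (Matrix.toLin' (g : Matrix (Fin 4) (Fin 4) ℂ)) L = L'

/-- The subspace `W(α) = {(x,y,z,w) ∈ ℂ⁴ : x + αz = 0, y − α⁻¹w = 0}`. -/
noncomputable def lineW (α : ℂ) : Submodule ℂ (Fin 4 → ℂ) where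
  carrier := {p | p 0 + α * p 2 = 0 ∧ p 1 - α⁻¹ * p 3 = 0}
  add_mem' := by
    rintro a b ⟨ha1, ha2⟩ ⟨hb1, hb2⟩
    refine ⟨?_, ?_⟩ <;> simp only [Pi.add_apply]
    · linear_combination ha1 + hb1
    · linear_combination ha2 + hb2
  zero_mem' := by simp
  smul_mem' := by
    rintro c p ⟨h1, h2⟩
    refine ⟨?_, ?_⟩ <;> simp only [Pi.smul_apply, smul_eq_mul]
    · linear_combination c * h1
    · linear_combination c * h2

/-- The subspace `W'(β) = {(x,y,z,w) ∈ ℂ⁴ : x + βw = 0, y − β⁻¹z = 0}`. -/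
noncomputable def lineW' (β : ℂ) : Submodule ℂ (Fin 4 → ℂ) where
  carrier := {p | p 0 + β * p 3 = 0 ∧ p 1 - β⁻¹ * p 2 = 0}
  add_mem' := by
    rintro a b ⟨ha1, ha2⟩ ⟨hb1, hb2⟩
    refine ⟨?_, ?_⟩ <;> simp only [Pi.add_apply]
    · linear_combination ha1 + hb1
    · linear_combination ha2 + hb2
  zero_mem' := by simp
  smul_mem' := by
    rintro c p ⟨h1, h2⟩
    refine ⟨?_, ?_⟩ <;> simp only [Pi.smul_apply, smul_eq_mul]
    · linear_combination c * h1
    · linear_combination c * h2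

/-- The set `𝒜 = {W(α) : Aα⁴ + Dα² + A = 0}` of one ruling of lines. -/
noncomputable def linesA (A D : ℂ) : Set (Submodule ℂ (Fin 4 → ℂ)) :=
  {W | ∃ α : ℂ, A * α ^ 4 + D * α ^ 2 + A = 0 ∧ W = lineW α}

/-- The set `ℬ = {W'(β) : Aβ⁴ + Eβ² + A = 0}` of the other ruling of lines. -/
noncomputable def linesB (A E : ℂ) : Set (Submodule ℂ (Fin 4 → ℂ)) :=
  {W | ∃ β : ℂ, A * β ^ 4 + E * β ^ 2 + A = 0 ∧ W = lineW' β}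

/-!
Every generator of `Γ` sends `W(α)` to `W(±α^{±1})` and `W'(β)` to `W'(±β^{±1})`, i.e. acts on
the parameters through the Klein four-group `α ↦ ±α^{±1}`. The roots of `A t⁴ + D t² + A` are
closed under this group, form a single orbit, and (as `D² ≠ 4A²` rules out `α⁴ = 1`) the orbit is
free. The generators are involutions which commute in `PGL₄(ℂ)` (`g₁, g₄` and `g₂, g₃` only up to
the scalar `-1`), so `Γ` consists of the sixteen products `g₁^a g₂^b g₃^c g₄^d`, and these act on
`𝒜 × ℬ` through the labels `(a + c, a + b; a + b + c + d, a)` over `𝔽₂`, a bijection `𝔽₂⁴ → 𝔽₂⁴`.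
-/

/-- The Klein four-group action `α ↦ ±α^{±1}` on `ℂ` (on all of `ℂ`, because `0⁻¹ = 0`). -/
noncomputable def signInv (s i : Bool) (α : ℂ) : ℂ :=
  (bif s then -1 else 1) * (bif i then α⁻¹ else α)

@[simp]
lemma signInv_false_false (α : ℂ) : signInv false false α = α := by simp [signInv]

lemma signInv_signInv (s i s' i' : Bool) (α : ℂ) :
    signInv s i (signInv s' i' α) = signInv (s ^^ s') (i ^^ i') α := by
  cases s <;> cases i <;> cases s' <;> cases i' <;> simp [signInv]

lemma signInv_signInv_self (s i : Bool) (α : ℂ) : signInv s i (signInv s i α) = α := by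
  simp [signInv_signInv]

lemma signInv_ne_zero {α : ℂ} (hα : α ≠ 0) (s i : Bool) : signInv s i α ≠ 0 := by
  cases s <;> cases i <;> simp [signInv, hα]

lemma signInv_eq_self {α : ℂ} (hα : α ≠ 0) (hα₄ : α ^ 4 ≠ 1) {s i : Bool}
    (h : signInv s i α = α) : s = false ∧ i = false := by
  cases s <;> cases i <;> simp only [signInv, cond_true, cond_false, one_mul, neg_one_mul] at h
  · exact ⟨rfl, rfl⟩
  · exact absurd (by field_simp at h; linear_combination (α ^ 2 + 1) * -h) hα₄
  · exact absurd (by linear_combination -h / 2) hα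
  · exact absurd (by field_simp at h; linear_combination (1 - α ^ 2) * h) hα₄

lemma signInv_injective {α : ℂ} (hα : α ≠ 0) (hα₄ : α ^ 4 ≠ 1) {s i s' i' : Bool}
    (h : signInv s i α = signInv s' i' α) : s = s' ∧ i = i' := by
  simpa using signInv_eq_self hα hα₄ (s := s ^^ s') (i := i ^^ i')
    (by rw [← signInv_signInv, ← h, signInv_signInv_self])

lemma root_signInv {A D α : ℂ} (h : A * α ^ 4 + D * α ^ 2 + A = 0) (s i : Bool) :
    A * signInv s i α ^ 4 + D * signInv s i α ^ 2 + A = 0 := by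
  rcases eq_or_ne α 0 with rfl | hα
  · cases s <;> cases i <;> simpa [signInv] using h
  cases s <;> cases i <;> simp only [signInv, cond_true, cond_false, one_mul, neg_one_mul]
  all_goals first | linear_combination h | (field_simp; linear_combination h)

lemma ne_zero_of_root {A D α : ℂ} (hA : A ≠ 0) (h : A * α ^ 4 + D * α ^ 2 + A = 0) :
    α ≠ 0 := by
  rintro rfl
  exact hA (by simpa using h)

lemma pow_four_ne_one_of_root {A D α : ℂ} (hD : D ^ 2 ≠ 4 * A ^ 2)
    (h : A * α ^ 4 + D * α ^ 2 + A = 0) : α ^ 4 ≠ 1 := fun h₄ =>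
  hD (by linear_combination (A ^ 2 * (α ^ 4 + 3) - D ^ 2) * h₄ + (D * α ^ 2 - A * α ^ 4 - A) * h)

lemma exists_signInv_eq_of_root {A D α β : ℂ} (hA : A ≠ 0)
    (hα : A * α ^ 4 + D * α ^ 2 + A = 0) (hβ : A * β ^ 4 + D * β ^ 2 + A = 0) :
    ∃ s i : Bool, β = signInv s i α := by
  have key : (β - α) * (β + α) * (α * β - 1) * (α * β + 1) = 0 := by
    refine (mul_eq_zero.mp ?_).resolve_left hA
    linear_combination α ^ 2 * hβ - β ^ 2 * hα
  simp only [mul_eq_zero, sub_eq_zero, add_eq_zero_iff_eq_neg] at key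
  rcases key with ((h | h) | h) | h
  · exact ⟨false, false, by simp [h]⟩
  · exact ⟨true, false, by simp [signInv, h]⟩
  · refine ⟨false, true, ?_⟩
    simp only [signInv, cond_false, cond_true, one_mul]
    exact eq_inv_of_mul_eq_one_right h
  · refine ⟨true, true, ?_⟩
    simp only [signInv, cond_true, neg_one_mul]
    rw [← eq_inv_of_mul_eq_one_right (by linear_combination -h : α * -β = 1), neg_neg]

lemma Subgroup.exists_cond_mul_of_mem_closure_insert {G : Type*} [Group G] {x : G} {s : Set G}
    (hx : x * x = 1) (hs : ∀ y ∈ s, Commute x y) {γ : G}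
    (hγ : γ ∈ Subgroup.closure (insert x s)) :
    ∃ b : Bool, ∃ δ ∈ Subgroup.closure s, γ = (bif b then x else 1) * δ := by
  have hcomm (b : Bool) {δ : G} (hδ : δ ∈ Subgroup.closure s) :
      Commute (bif b then x else 1) δ := by
    have : Subgroup.closure s ≤ Subgroup.centralizer {x} :=
      (Subgroup.closure_le _).mpr fun y hy =>
        Subgroup.mem_centralizer_singleton_iff.mpr (hs y hy).symm
    cases b
    · exact Commute.one_left δ
    · exact (Subgroup.mem_centralizer_singleton_iff.mp (this hδ)).symm
  have hmul (b b' : Bool) :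
      (bif b then x else 1) * (bif b' then x else 1) = bif b ^^ b' then x else 1 := by
    cases b <;> cases b' <;> simp [hx]
  induction hγ using Subgroup.closure_induction with
  | mem y hy =>
    rcases hy with rfl | hy
    · exact ⟨true, 1, one_mem _, by simp⟩
    · exact ⟨false, y, Subgroup.subset_closure hy, by simp⟩
  | one => exact ⟨false, 1, one_mem _, by simp⟩
  | mul y z _ _ hy hz =>
    obtain ⟨b, δ, hδ, rfl⟩ := hy
    obtain ⟨b', δ', hδ', rfl⟩ := hz
    refine ⟨b ^^ b', δ * δ', mul_mem hδ hδ', ?_⟩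
    simp only [← hmul, mul_assoc]
    rw [← mul_assoc δ, ← (hcomm b' hδ).eq, mul_assoc]
  | inv y _ hy =>
    obtain ⟨b, δ, hδ, rfl⟩ := hy
    refine ⟨b, δ⁻¹, inv_mem hδ, ?_⟩
    have hinv : (bif b then x else 1)⁻¹ = bif b then x else 1 :=
      inv_eq_of_mul_eq_one_right (by rw [hmul, Bool.xor_self, cond_false])
    rw [_root_.mul_inv_rev, hinv, (hcomm b (inv_mem hδ)).eq]

lemma toPGL_eq_toPGL_iff {n : ℕ} {g h : GL (Fin n) ℂ} :
    toPGL n g = toPGL n h ↔ ∃ c : ℂˣ, (h : Matrix (Fin n) (Fin n) ℂ) = (c : ℂ) • g := by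
  refine (QuotientGroup.mk'_eq_mk' (scalarUnits n)).trans ?_
  simp only [scalarUnits, MonoidHom.mem_range, exists_exists_eq_and]
  simp only [Units.ext_iff, Units.val_mul, Units.coe_map, MonoidHom.coe_coe,
    RingHom.toMonoidHom_eq_coe, Algebra.algebraMap_eq_smul_one, Matrix.mul_smul, mul_one]
  exact exists_congr fun c => eq_comm

lemma mapsLine_iff {γ : PGL 4} {g : GL (Fin 4) ℂ} (hg : toPGL 4 g = γ)
    {L L' : Submodule ℂ (Fin 4 → ℂ)} :
    mapsLine γ L L' ↔ L.map (toLin' (g : Matrix (Fin 4) (Fin 4) ℂ)) = L' := by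
  refine ⟨?_, fun h => ⟨g, hg, h⟩⟩
  rintro ⟨g', hg', rfl⟩
  obtain ⟨c, hc⟩ := toPGL_eq_toPGL_iff.mp (hg'.trans hg.symm)
  rw [hc, map_smul, Submodule.map_smul _ _ _ c.ne_zero]

lemma commute_toPGL_of_anticommute {n : ℕ} {g h : GL (Fin n) ℂ}
    (H : ((h * g : GL (Fin n) ℂ) : Matrix (Fin n) (Fin n) ℂ) = -(g * h : GL (Fin n) ℂ)) :
    Commute (toPGL n g) (toPGL n h) := by
  simp only [Commute, SemiconjBy, ← map_mul, toPGL_eq_toPGL_iff]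
  exact ⟨-1, by simpa using H⟩

lemma g₁_mul_self : g₁ * g₁ = 1 := by
  ext i j; fin_cases i <;> fin_cases j <;> simp [g₁, Matrix.mul_apply, Fin.sum_univ_four]

lemma g₂_mul_self : g₂ * g₂ = 1 := by
  ext i j; fin_cases i <;> fin_cases j <;> simp [g₂, Matrix.mul_apply, Fin.sum_univ_four]

lemma g₃_mul_self : g₃ * g₃ = 1 := by
  ext i j; fin_cases i <;> fin_cases j <;> simp [g₃, Matrix.mul_apply, Fin.sum_univ_four]

lemma g₄_mul_self : g₄ * g₄ = 1 := by
  ext i j; fin_cases i <;> fin_cases j <;> simp [g₄, Matrix.mul_apply, Fin.sum_univ_four]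

lemma commute_g₁_g₂ : Commute g₁ g₂ := by
  ext i j; fin_cases i <;> fin_cases j <;> simp [g₁, g₂, Matrix.mul_apply, Fin.sum_univ_four]

lemma commute_g₁_g₃ : Commute g₁ g₃ := by
  ext i j; fin_cases i <;> fin_cases j <;> simp [g₁, g₃, Matrix.mul_apply, Fin.sum_univ_four]

lemma commute_g₂_g₄ : Commute g₂ g₄ := by
  ext i j; fin_cases i <;> fin_cases j <;> simp [g₂, g₄, Matrix.mul_apply, Fin.sum_univ_four]

lemma commute_g₃_g₄ : Commute g₃ g₄ := by
  ext i j; fin_cases i <;> fin_cases j <;> simp [g₃, g₄, Matrix.mul_apply, Fin.sum_univ_four]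

lemma coe_g₄_mul_g₁ :
    ((g₄ * g₁ : GL (Fin 4) ℂ) : Matrix (Fin 4) (Fin 4) ℂ) = -(g₁ * g₄ : GL (Fin 4) ℂ) := by
  ext i j; fin_cases i <;> fin_cases j <;> simp [g₁, g₄, Matrix.mul_apply, Fin.sum_univ_four]

lemma coe_g₃_mul_g₂ :
    ((g₃ * g₂ : GL (Fin 4) ℂ) : Matrix (Fin 4) (Fin 4) ℂ) = -(g₂ * g₃ : GL (Fin 4) ℂ) := by
  ext i j; fin_cases i <;> fin_cases j <;> simp [g₂, g₃, Matrix.mul_apply, Fin.sum_univ_four]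

noncomputable def gammaRep (a b c d : Bool) : GL (Fin 4) ℂ :=
  (bif a then g₁ else 1) * (bif b then g₂ else 1) * (bif c then g₃ else 1) *
    (bif d then g₄ else 1)

lemma toPGL_gammaRep_mem (a b c d : Bool) : toPGL 4 (gammaRep a b c d) ∈ Γ := by
  have hgen {g : GL (Fin 4) ℂ} (b : Bool) (hg : toPGL 4 g ∈ Γ) :
      toPGL 4 (bif b then g else 1) ∈ Γ := by
    cases b <;> simp [hg, one_mem]
  simp only [gammaRep, map_mul]
  refine mul_mem (mul_mem (mul_mem (hgen a ?_) (hgen b ?_)) (hgen c ?_)) (hgen d ?_) <;>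
    exact Subgroup.subset_closure (by simp)

lemma exists_gammaRep_of_mem {γ : PGL 4} (hγ : γ ∈ Γ) :
    ∃ a b c d : Bool, toPGL 4 (gammaRep a b c d) = γ := by
  have hsq {g : GL (Fin 4) ℂ} (hg : g * g = 1) : toPGL 4 g * toPGL 4 g = 1 := by
    rw [← map_mul, hg, map_one]
  obtain ⟨a, δ₁, h₁, rfl⟩ := Subgroup.exists_cond_mul_of_mem_closure_insert (hsq g₁_mul_self)
    (by simpa using ⟨commute_g₁_g₂.map (toPGL 4), commute_g₁_g₃.map (toPGL 4),
      commute_toPGL_of_anticommute coe_g₄_mul_g₁⟩) hγ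
  obtain ⟨b, δ₂, h₂, rfl⟩ := Subgroup.exists_cond_mul_of_mem_closure_insert (hsq g₂_mul_self)
    (by simpa using ⟨commute_toPGL_of_anticommute coe_g₃_mul_g₂, commute_g₂_g₄.map (toPGL 4)⟩) h₁
  obtain ⟨c, δ₃, h₃, rfl⟩ := Subgroup.exists_cond_mul_of_mem_closure_insert (hsq g₃_mul_self)
    (by simpa using commute_g₃_g₄.map (toPGL 4)) h₂
  obtain ⟨d, δ₄, h₄, rfl⟩ := Subgroup.exists_cond_mul_of_mem_closure_insert (s := ∅)
    (hsq g₄_mul_self) (by simp) (by simpa using h₃)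
  rw [Subgroup.closure_empty, Subgroup.mem_bot] at h₄
  refine ⟨a, b, c, d, ?_⟩
  simp only [gammaRep, h₄, map_mul, Bool.apply_cond (toPGL 4), map_one, mul_one, mul_assoc]

lemma lineW_injective : Function.Injective lineW := by
  intro α α' h
  have hv : (![-α, 0, 1, 0] : Fin 4 → ℂ) ∈ lineW α' := h ▸ ⟨by simp, by simp⟩
  simpa [lineW, neg_add_eq_zero, eq_comm] using hv.1

lemma lineW'_injective : Function.Injective lineW' := by
  intro β β' h
  have hv : (![-β, 0, 0, 1] : Fin 4 → ℂ) ∈ lineW' β' := h ▸ ⟨by simp, by simp⟩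
  simpa [lineW', neg_add_eq_zero, eq_comm] using hv.1

def ActsBySignInv (line : ℂ → Submodule ℂ (Fin 4 → ℂ)) (g : GL (Fin 4) ℂ) (s i : Bool) : Prop :=
  ∀ α ≠ 0, (line α).map (toLin' (g : Matrix (Fin 4) (Fin 4) ℂ)) = line (signInv s i α)

namespace ActsBySignInv

variable {line : ℂ → Submodule ℂ (Fin 4 → ℂ)} {g h : GL (Fin 4) ℂ} {s i : Bool}

/-- For an involution `g` one inclusion suffices, since `signInv s i` is an involution too. -/
lemma of_mapsTo (hg : g * g = 1)
    (H : ∀ α ≠ 0, ∀ p ∈ line α, toLin' (g : Matrix (Fin 4) (Fin 4) ℂ) p ∈ line (signInv s i α)) :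
    ActsBySignInv line g s i := by
  intro α hα
  refine le_antisymm (Submodule.map_le_iff_le_comap.mpr fun p hp => H α hα p hp) fun q hq => ?_
  refine ⟨toLin' (g : Matrix (Fin 4) (Fin 4) ℂ) q, ?_, ?_⟩
  · simpa [signInv_signInv_self] using H _ (signInv_ne_zero hα s i) q hq
  · rw [← LinearMap.comp_apply, ← toLin'_mul, ← Units.val_mul, hg, Units.val_one, toLin'_one,
      LinearMap.id_apply]

lemma mul (hg : ActsBySignInv line g s i) {s' i' : Bool} (hh : ActsBySignInv line h s' i') :
    ActsBySignInv line (g * h) (s ^^ s') (i ^^ i') := by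
  intro α hα
  rw [Units.val_mul, toLin'_mul, Submodule.map_comp, hh α hα, hg _ (signInv_ne_zero hα _ _),
    signInv_signInv]

lemma cond (hg : ActsBySignInv line g s i) (b : Bool) :
    ActsBySignInv line (bif b then g else 1) (b && s) (b && i) := by
  cases b
  · intro α _
    simp [toLin'_one]
  · exact hg

lemma mapsLine_toPGL_iff (hg : ActsBySignInv line g s i) {α : ℂ} (hα : α ≠ 0)
    {L : Submodule ℂ (Fin 4 → ℂ)} :
    mapsLine (toPGL 4 g) (line α) L ↔ line (signInv s i α) = L := by
  rw [mapsLine_iff rfl, hg α hα]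

end ActsBySignInv

lemma toLin'_g₁_apply (p : Fin 4 → ℂ) :
    toLin' (g₁ : Matrix (Fin 4) (Fin 4) ℂ) p = ![p 1, p 0, p 3, p 2] := by
  ext i; fin_cases i <;> simp [g₁, Matrix.mulVec, dotProduct, Fin.sum_univ_four]

lemma toLin'_g₂_apply (p : Fin 4 → ℂ) :
    toLin' (g₂ : Matrix (Fin 4) (Fin 4) ℂ) p = ![p 2, p 3, p 0, p 1] := by
  ext i; fin_cases i <;> simp [g₂, Matrix.mulVec, dotProduct, Fin.sum_univ_four]

lemma toLin'_g₃_apply (p : Fin 4 → ℂ) :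
    toLin' (g₃ : Matrix (Fin 4) (Fin 4) ℂ) p = ![p 0, p 1, -p 2, -p 3] := by
  ext i; fin_cases i <;> simp [g₃, Matrix.mulVec, dotProduct, Fin.sum_univ_four]

lemma toLin'_g₄_apply (p : Fin 4 → ℂ) :
    toLin' (g₄ : Matrix (Fin 4) (Fin 4) ℂ) p = ![p 0, -p 1, p 2, -p 3] := by
  ext i; fin_cases i <;> simp [g₄, Matrix.mulVec, dotProduct, Fin.sum_univ_four]

lemma actsBySignInv_g₁_lineW : ActsBySignInv lineW g₁ true true :=
  .of_mapsTo g₁_mul_self fun α _ p ⟨h₁, h₂⟩ => by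
    rw [toLin'_g₁_apply]
    refine ⟨?_, ?_⟩ <;>
      simp only [signInv, cond_true, neg_mul, one_mul, inv_neg, inv_inv, Matrix.cons_val]
    · linear_combination h₂
    · linear_combination h₁

lemma actsBySignInv_g₂_lineW : ActsBySignInv lineW g₂ false true :=
  .of_mapsTo g₂_mul_self fun α hα p ⟨h₁, h₂⟩ => by
    have hα' : α * α⁻¹ = 1 := mul_inv_cancel₀ hα
    rw [toLin'_g₂_apply]
    refine ⟨?_, ?_⟩ <;>
      simp only [signInv, cond_true, cond_false, one_mul, inv_inv, Matrix.cons_val]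
    · linear_combination α⁻¹ * h₁ - p 2 * hα'
    · linear_combination -α * h₂ - p 3 * hα'

lemma actsBySignInv_g₃_lineW : ActsBySignInv lineW g₃ true false :=
  .of_mapsTo g₃_mul_self fun α _ p ⟨h₁, h₂⟩ => by
    rw [toLin'_g₃_apply]
    refine ⟨?_, ?_⟩ <;>
      simp only [signInv, cond_true, cond_false, neg_mul, one_mul, inv_neg, Matrix.cons_val]
    · linear_combination h₁
    · linear_combination h₂

lemma actsBySignInv_g₄_lineW : ActsBySignInv lineW g₄ false false :=
  .of_mapsTo g₄_mul_self fun α _ p ⟨h₁, h₂⟩ => by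
    rw [toLin'_g₄_apply]
    refine ⟨?_, ?_⟩ <;> simp only [signInv, cond_false, one_mul, Matrix.cons_val]
    · linear_combination h₁
    · linear_combination -h₂

lemma actsBySignInv_g₁_lineW' : ActsBySignInv lineW' g₁ true true :=
  .of_mapsTo g₁_mul_self fun α _ p ⟨h₁, h₂⟩ => by
    rw [toLin'_g₁_apply]
    refine ⟨?_, ?_⟩ <;>
      simp only [signInv, cond_true, neg_mul, one_mul, inv_neg, inv_inv, Matrix.cons_val]
    · linear_combination h₂
    · linear_combination h₁

lemma actsBySignInv_g₂_lineW' : ActsBySignInv lineW' g₂ true false :=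
  .of_mapsTo g₂_mul_self fun α hα p ⟨h₁, h₂⟩ => by
    have hα' : α * α⁻¹ = 1 := mul_inv_cancel₀ hα
    rw [toLin'_g₂_apply]
    refine ⟨?_, ?_⟩ <;>
      simp only [signInv, cond_true, cond_false, neg_mul, one_mul, inv_neg, Matrix.cons_val]
    · linear_combination -α * h₂ - p 2 * hα'
    · linear_combination α⁻¹ * h₁ - p 3 * hα'

lemma actsBySignInv_g₃_lineW' : ActsBySignInv lineW' g₃ true false :=
  .of_mapsTo g₃_mul_self fun α _ p ⟨h₁, h₂⟩ => by
    rw [toLin'_g₃_apply]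
    refine ⟨?_, ?_⟩ <;>
      simp only [signInv, cond_true, cond_false, neg_mul, one_mul, inv_neg, Matrix.cons_val]
    · linear_combination h₁
    · linear_combination h₂

lemma actsBySignInv_g₄_lineW' : ActsBySignInv lineW' g₄ true false :=
  .of_mapsTo g₄_mul_self fun α _ p ⟨h₁, h₂⟩ => by
    rw [toLin'_g₄_apply]
    refine ⟨?_, ?_⟩ <;>
      simp only [signInv, cond_true, cond_false, neg_mul, one_mul, inv_neg, Matrix.cons_val]
    · linear_combination h₁
    · linear_combination -h₂

lemma actsBySignInv_gammaRep_lineW (a b c d : Bool) :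
    ActsBySignInv lineW (gammaRep a b c d) (a ^^ c) (a ^^ b) := by
  simpa [gammaRep] using
    (((actsBySignInv_g₁_lineW.cond a).mul (actsBySignInv_g₂_lineW.cond b)).mul
      (actsBySignInv_g₃_lineW.cond c)).mul (actsBySignInv_g₄_lineW.cond d)

lemma actsBySignInv_gammaRep_lineW' (a b c d : Bool) :
    ActsBySignInv lineW' (gammaRep a b c d) (a ^^ b ^^ c ^^ d) a := by
  simpa [gammaRep] using
    (((actsBySignInv_g₁_lineW'.cond a).mul (actsBySignInv_g₂_lineW'.cond b)).mul
      (actsBySignInv_g₃_lineW'.cond c)).mul (actsBySignInv_g₄_lineW'.cond d)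

lemma exists_xor_labels_eq : ∀ s i s' i' : Bool,
    ∃ a b c d : Bool, (a ^^ c) = s ∧ (a ^^ b) = i ∧ (a ^^ b ^^ c ^^ d) = s' ∧ a = i' := by
  decide

lemma xor_labels_injective : ∀ a b c d a' b' c' d' : Bool,
    (a ^^ c) = (a' ^^ c') → (a ^^ b) = (a' ^^ b') → (a ^^ b ^^ c ^^ d) = (a' ^^ b' ^^ c' ^^ d') →
      a = a' → a = a' ∧ b = b' ∧ c = c' ∧ d = d' := by
  decide

lemma exists_mapsLine_linesA {A D : ℂ} (hA : A ≠ 0) {γ : PGL 4} (hγ : γ ∈ Γ)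
    {L : Submodule ℂ (Fin 4 → ℂ)} (hL : L ∈ linesA A D) : ∃ L' ∈ linesA A D, mapsLine γ L L' := by
  obtain ⟨α, hα, rfl⟩ := hL
  obtain ⟨a, b, c, d, rfl⟩ := exists_gammaRep_of_mem hγ
  exact ⟨_, ⟨_, root_signInv hα _ _, rfl⟩,
    ((actsBySignInv_gammaRep_lineW a b c d).mapsLine_toPGL_iff (ne_zero_of_root hA hα)).mpr rfl⟩

lemma exists_mapsLine_linesB {A E : ℂ} (hA : A ≠ 0) {γ : PGL 4} (hγ : γ ∈ Γ)
    {M : Submodule ℂ (Fin 4 → ℂ)} (hM : M ∈ linesB A E) : ∃ M' ∈ linesB A E, mapsLine γ M M' := by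
  obtain ⟨β, hβ, rfl⟩ := hM
  obtain ⟨a, b, c, d, rfl⟩ := exists_gammaRep_of_mem hγ
  exact ⟨_, ⟨_, root_signInv hβ _ _, rfl⟩,
    ((actsBySignInv_gammaRep_lineW' a b c d).mapsLine_toPGL_iff (ne_zero_of_root hA hβ)).mpr rfl⟩

theorem gamma_simply_transitive_general (A D E : ℂ) (hA : A ≠ 0)
    (hD : D ^ 2 ≠ 4 * A ^ 2) (hE : E ^ 2 ≠ 4 * A ^ 2) :
    (∀ γ ∈ Γ, ∀ L ∈ linesA A D, ∃ L' ∈ linesA A D, mapsLine γ L L') ∧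
      (∀ γ ∈ Γ, ∀ M ∈ linesB A E, ∃ M' ∈ linesB A E, mapsLine γ M M') ∧
      ∀ L₁ ∈ linesA A D, ∀ L₂ ∈ linesA A D, ∀ M₁ ∈ linesB A E, ∀ M₂ ∈ linesB A E,
        ∃! γ : PGL 4, γ ∈ Γ ∧ mapsLine γ L₁ L₂ ∧ mapsLine γ M₁ M₂ := by
  refine ⟨fun γ hγ L hL => exists_mapsLine_linesA hA hγ hL,
    fun γ hγ M hM => exists_mapsLine_linesB hA hγ hM, ?_⟩
  rintro _ ⟨α, hα, rfl⟩ _ ⟨α', hα', rfl⟩ _ ⟨β, hβ, rfl⟩ _ ⟨β', hβ', rfl⟩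
  obtain ⟨s, i, rfl⟩ := exists_signInv_eq_of_root hA hα hα'
  obtain ⟨s', i', rfl⟩ := exists_signInv_eq_of_root hA hβ hβ'
  have hα₀ := ne_zero_of_root hA hα
  have hβ₀ := ne_zero_of_root hA hβ
  obtain ⟨a, b, c, d, rfl, rfl, rfl, rfl⟩ := exists_xor_labels_eq s i s' i'
  refine ⟨toPGL 4 (gammaRep a b c d), ⟨toPGL_gammaRep_mem a b c d,
    ((actsBySignInv_gammaRep_lineW a b c d).mapsLine_toPGL_iff hα₀).mpr rfl,
    ((actsBySignInv_gammaRep_lineW' a b c d).mapsLine_toPGL_iff hβ₀).mpr rfl⟩, ?_⟩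
  rintro _ ⟨hγ, hL, hM⟩
  obtain ⟨a', b', c', d', rfl⟩ := exists_gammaRep_of_mem hγ
  rw [(actsBySignInv_gammaRep_lineW a' b' c' d').mapsLine_toPGL_iff hα₀] at hL
  rw [(actsBySignInv_gammaRep_lineW' a' b' c' d').mapsLine_toPGL_iff hβ₀] at hM
  obtain ⟨hac, hab⟩ :=
    signInv_injective hα₀ (pow_four_ne_one_of_root hD hα) (lineW_injective hL)
  obtain ⟨habcd, ha⟩ :=
    signInv_injective hβ₀ (pow_four_ne_one_of_root hE hβ) (lineW'_injective hM)
  obtain ⟨rfl, rfl, rfl, rfl⟩ := xor_labels_injective _ _ _ _ _ _ _ _ hac hab habcd ha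
  rfl

/-- `Γ` preserves the two rulings `𝒜` and `ℬ` of the eight lines, and acts simply
transitively on `𝒜 × ℬ`: given `L₁, L₂ ∈ 𝒜` and `M₁, M₂ ∈ ℬ` there is a unique
`γ ∈ Γ` with `γ(L₁) = L₂` and `γ(M₁) = M₂`. -/
theorem gamma_simply_transitive (A B C D E : ℂ) (hA : A ≠ 0)
    (h : A * B - 2 * A * C + D * E = 0)
    (hD : D ^ 2 ≠ 4 * A ^ 2) (hE : E ^ 2 ≠ 4 * A ^ 2) :
    (∀ γ ∈ Γ, ∀ L ∈ linesA A D, ∃ L' ∈ linesA A D, mapsLine γ L L') ∧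
      (∀ γ ∈ Γ, ∀ M ∈ linesB A E, ∃ M' ∈ linesB A E, mapsLine γ M M') ∧
      ∀ L₁ ∈ linesA A D, ∀ L₂ ∈ linesA A D, ∀ M₁ ∈ linesB A E, ∀ M₂ ∈ linesB A E,
        ∃! γ : PGL 4, γ ∈ Γ ∧ mapsLine γ L₁ L₂ ∧ mapsLine γ M₁ M₂ :=
  gamma_simply_transitive_general A D E hA hD hE
end
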